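/- arXiv:1210.1100 — 6 statements merged into one kernel-verified Lean document; each statement's English description precedes it below -/
import Mathlib

section
/- Every locally decreasing abstract rewrite system is confluent. That is, if A is a binary relation on a set of objects and there exist a transitive, well-founded relation ≺ on a set of labels and a labeled abstract rewrite system B whose unlabeled version equals A such that every local peak of B can be completed into a decreasing diagram, then A is confluent. -/
open Relation

universe u v

variable {α : Type u} {β : Type v}

/-- down-set of a set of labels -/
def ds (r : β → β → Prop) (S : Set β) : Set β := {b | ∃ a ∈ S, r b a}

/-- down-set of a multiset of labels -/
def dm (r : β → β → Prop) (M : Multiset β) : Set β := ds r {a | a ∈ M}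

/-- down-set of a list of labels -/
def dl (r : β → β → Prop) (σ : List β) : Set β := ds r {a | a ∈ σ}

/-- `M -s S`: remove from the multiset `M` all occurrences of elements of the set `S` -/
noncomputable def msub (M : Multiset β) (S : Set β) : Multiset β :=
  @Multiset.filter β (fun a => a ∉ S) (Classical.decPred _) M

/-- `M ≼_mul N` -/
def mulLe (r : β → β → Prop) (M N : Multiset β) : Prop :=
  ∃ I J K : Multiset β, M = I + K ∧ N = I + J ∧ ∀ k ∈ K, k ∈ dm r J

/-- `M ≺_mul N`: the multiset extension of `r` -/
def mulLt (r : β → β → Prop) (M N : Multiset β) : Prop :=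
  ∃ I J K : Multiset β, M = I + K ∧ N = I + J ∧ (∀ k ∈ K, k ∈ dm r J) ∧ J ≠ 0

/-- the one-step multiset extension of `r` -/
def mult1 (r : β → β → Prop) (M N : Multiset β) : Prop :=
  ∃ (a : β) (I K : Multiset β), M = I + K ∧ N = I + {a} ∧ ∀ b ∈ K, r b a

/-- the lexicographic maximum measure `|σ|` -/
noncomputable def lexmax (r : β → β → Prop) : List β → Multiset β
  | [] => 0
  | a :: σ => {a} + msub (lexmax r σ) (ds r {a})

/-- the quadruple of label lists `(τ, σ, σ', τ')` is decreasing -/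
def Decreasing (r : β → β → Prop) (τ σ σ' τ' : List β) : Prop :=
  mulLe r (lexmax r (σ ++ τ')) (lexmax r τ + lexmax r σ) ∧
  mulLe r (lexmax r (τ ++ σ')) (lexmax r τ + lexmax r σ)

/-- labeled rewrite sequences of the labeled ARS `B` -/
inductive LSeq (B : α → β → α → Prop) : α → List β → α → Prop
  | nil (a : α) : LSeq B a [] a
  | cons {a b c : α} {l : β} {σ : List β} :
      B a l b → LSeq B b σ c → LSeq B a (l :: σ) c

/-- labeled conversions of the labeled ARS `B` -/
inductive Conv (B : α → β → α → Prop) : α → List β → α → Prop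
  | nil (a : α) : Conv B a [] a
  | fwd {a b c : α} {l : β} {σ : List β} :
      B a l b → Conv B b σ c → Conv B a (l :: σ) c
  | bwd {a b c : α} {l : β} {σ : List β} :
      B b l a → Conv B b σ c → Conv B a (l :: σ) c

/-- the local peak `b ←lb a →lc c` is decreasing with respect to conversions -/
def LDConv (B : α → β → α → Prop) (r : β → β → Prop) (b c : α) (lb lc : β) : Prop :=
  ∃ (d b1 b2 c1 c2 : α) (σ1 σ3 τ1 τ3 : List β),
    Conv B b σ1 b1 ∧ (∀ l ∈ σ1, l ∈ ds r ({lc} : Set β)) ∧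
    (b1 = b2 ∨ B b1 lb b2) ∧
    Conv B b2 σ3 d ∧ (∀ l ∈ σ3, l ∈ ds r ({lc, lb} : Set β)) ∧
    Conv B c τ1 c1 ∧ (∀ l ∈ τ1, l ∈ ds r ({lb} : Set β)) ∧
    (c1 = c2 ∨ B c1 lc c2) ∧
    Conv B c2 τ3 d ∧ (∀ l ∈ τ3, l ∈ ds r ({lc, lb} : Set β))

/-- confluence of an abstract rewrite system -/
def Confluent (A : α → α → Prop) : Prop :=
  ∀ a b c : α, ReflTransGen A a b → ReflTransGen A a c →
    ∃ d, ReflTransGen A b d ∧ ReflTransGen A c d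


section Basics

variable {r : β → β → Prop}

lemma mem_ds {S : Set β} {x : β} : x ∈ ds r S ↔ ∃ a ∈ S, r x a := Iff.rfl

lemma mem_dm {J : Multiset β} {x : β} : x ∈ dm r J ↔ ∃ j ∈ J, r x j := Iff.rfl

lemma mem_dl {σ : List β} {x : β} : x ∈ dl r σ ↔ ∃ a ∈ σ, r x a := Iff.rfl

lemma ds_mono {S T : Set β} (h : S ⊆ T) : ds r S ⊆ ds r T :=
  fun _ ⟨a, ha, hr⟩ => ⟨a, h ha, hr⟩

lemma ds_down (ht : Transitive r) {S : Set β} {x y : β} (hx : x ∈ ds r S) (h : r y x) :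
    y ∈ ds r S := by
  obtain ⟨a, ha, hr⟩ := hx
  exact ⟨a, ha, ht h hr⟩

lemma dm_le {J J' : Multiset β} (h : J ≤ J') : dm r J ⊆ dm r J' :=
  fun _ ⟨j, hj, hr⟩ => ⟨j, Multiset.mem_of_le h hj, hr⟩

lemma dl_cons (a : β) (σ : List β) : dl r (a :: σ) = ds r {a} ∪ dl r σ := by
  ext x
  constructor
  · rintro ⟨y, hy, hr⟩
    rcases List.mem_cons.1 hy with rfl | hy
    · exact Or.inl ⟨y, rfl, hr⟩
    · exact Or.inr ⟨y, hy, hr⟩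
  · rintro (⟨y, hy, hr⟩ | ⟨y, hy, hr⟩)
    · exact ⟨y, List.mem_cons.2 (Or.inl hy), hr⟩
    · exact ⟨y, List.mem_cons.2 (Or.inr hy), hr⟩

lemma dl_append (σ τ : List β) : dl r (σ ++ τ) = dl r σ ∪ dl r τ := by
  ext x
  constructor
  · rintro ⟨y, hy, hr⟩
    rcases List.mem_append.1 hy with hy | hy
    · exact Or.inl ⟨y, hy, hr⟩
    · exact Or.inr ⟨y, hy, hr⟩
  · rintro (⟨y, hy, hr⟩ | ⟨y, hy, hr⟩)
    · exact ⟨y, List.mem_append.2 (Or.inl hy), hr⟩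
    · exact ⟨y, List.mem_append.2 (Or.inr hy), hr⟩

/-- the part of `M` inside `S` -/
noncomputable def mfil (M : Multiset β) (S : Set β) : Multiset β :=
  @Multiset.filter β (fun a => a ∈ S) (Classical.decPred _) M

lemma mem_msub {M : Multiset β} {S : Set β} {x : β} : x ∈ msub M S ↔ x ∈ M ∧ x ∉ S :=
  @Multiset.mem_filter β (fun a => a ∉ S) (Classical.decPred _) x M

lemma mem_mfil {M : Multiset β} {S : Set β} {x : β} : x ∈ mfil M S ↔ x ∈ M ∧ x ∈ S :=
  @Multiset.mem_filter β (fun a => a ∈ S) (Classical.decPred _) x M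

lemma msub_add (M N : Multiset β) (S : Set β) : msub (M + N) S = msub M S + msub N S :=
  @Multiset.filter_add β (fun a => a ∉ S) (Classical.decPred _) M N

@[simp] lemma msub_zero (S : Set β) : msub (0 : Multiset β) S = 0 :=
  @Multiset.filter_zero β (fun a => a ∉ S) (Classical.decPred _)

@[simp] lemma mfil_zero (S : Set β) : mfil (0 : Multiset β) S = 0 :=
  @Multiset.filter_zero β (fun a => a ∈ S) (Classical.decPred _)

lemma msub_le (M : Multiset β) (S : Set β) : msub M S ≤ M :=
  @Multiset.filter_le β (fun a => a ∉ S) (Classical.decPred _) M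

lemma msub_le_msub {M N : Multiset β} (S : Set β) (h : M ≤ N) : msub M S ≤ msub N S :=
  @Multiset.filter_le_filter β (fun a => a ∉ S) (Classical.decPred _) M N h

lemma filter_irrel {p : β → Prop} (i1 i2 : DecidablePred p) (M : Multiset β) :
    @Multiset.filter β p i1 M = @Multiset.filter β p i2 M := by
  cases Subsingleton.elim i1 i2; rfl

lemma msub_msub (M : Multiset β) (S T : Set β) : msub (msub M S) T = msub M (S ∪ T) := by
  unfold msub
  rw [@Multiset.filter_filter β (fun a => a ∉ T) (Classical.decPred _) (fun a => a ∉ S)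
    (Classical.decPred _) M, filter_irrel _ (Classical.decPred _) M]
  refine @Multiset.filter_congr β (fun a => a ∉ T ∧ a ∉ S) (fun a => a ∉ S ∪ T)
    (Classical.decPred _) (Classical.decPred _) M ?_
  intro x _
  constructor
  · rintro ⟨h1, h2⟩ (h | h)
    · exact h2 h
    · exact h1 h
  · intro h; exact ⟨fun h2 => h (Or.inr h2), fun h1 => h (Or.inl h1)⟩

lemma msub_add_mfil (M : Multiset β) (S : Set β) : msub M S + mfil M S = M := by
  induction M using Multiset.induction_on with
  | empty => simp
  | cons a M ih =>
    unfold msub mfil at *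
    by_cases h : a ∈ S
    · rw [@Multiset.filter_cons_of_neg β (fun a => a ∉ S) (Classical.decPred _) a M
          (by simp [h]),
        @Multiset.filter_cons_of_pos β (fun a => a ∈ S) (Classical.decPred _) a M h,
        ← Multiset.singleton_add, add_left_comm, ih, Multiset.singleton_add]
    · rw [@Multiset.filter_cons_of_pos β (fun a => a ∉ S) (Classical.decPred _) a M h,
        @Multiset.filter_cons_of_neg β (fun a => a ∈ S) (Classical.decPred _) a M h,
        ← Multiset.singleton_add, add_assoc, ih, Multiset.singleton_add]

lemma msub_eq_self {M : Multiset β} {S : Set β} (h : ∀ x ∈ M, x ∉ S) : msub M S = M :=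
  (@Multiset.filter_eq_self β (fun a => a ∉ S) (Classical.decPred _) M).2 h

lemma mfil_subset {M : Multiset β} {S : Set β} : ∀ x ∈ mfil M S, x ∈ S :=
  fun _ hx => (mem_mfil.1 hx).2

end Basics
section MulOrder

variable {r : β → β → Prop}

lemma mulLe_refl (M : Multiset β) : mulLe r M M :=
  ⟨M, 0, 0, by simp, by simp, by simp⟩

lemma mulLe_of_le {M N : Multiset β} (h : M ≤ N) : mulLe r M N := by
  obtain ⟨J, rfl⟩ := Multiset.le_iff_exists_add.1 h
  exact ⟨M, J, 0, by simp, rfl, by simp⟩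

lemma mulLt_mulLe {M N : Multiset β} (h : mulLt r M N) : mulLe r M N := by
  obtain ⟨I, J, K, e1, e2, hK, _⟩ := h
  exact ⟨I, J, K, e1, e2, hK⟩

lemma mulLe_add {M N P Q : Multiset β} (h1 : mulLe r M N) (h2 : mulLe r P Q) :
    mulLe r (M + P) (N + Q) := by
  obtain ⟨I1, J1, K1, e11, e12, hK1⟩ := h1
  obtain ⟨I2, J2, K2, e21, e22, hK2⟩ := h2
  refine ⟨I1 + I2, J1 + J2, K1 + K2, ?_, ?_, ?_⟩
  · rw [e11, e21]; abel
  · rw [e12, e22]; abel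
  · intro k hk
    rcases Multiset.mem_add.1 hk with hk | hk
    · exact dm_le (Multiset.le_add_right _ _) (hK1 k hk)
    · exact dm_le (Multiset.le_add_left _ _) (hK2 k hk)

/-- Riesz decomposition for multisets -/
lemma multiset_refine :
    ∀ (J₁ I₁ I₂ K₂ : Multiset β), I₁ + J₁ = I₂ + K₂ →
      ∃ A B C D : Multiset β, I₁ = A + B ∧ J₁ = C + D ∧ I₂ = A + C ∧ K₂ = B + D := by
  intro J₁
  induction J₁ using Multiset.induction_on with
  | empty =>
    intro I₁ I₂ K₂ h
    exact ⟨I₂, K₂, 0, 0, by simpa using h, by simp, by simp, by simp⟩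
  | cons a J ih =>
    intro I₁ I₂ K₂ h
    have ha : a ∈ I₂ + K₂ := by
      rw [← h]; exact Multiset.mem_add.2 (Or.inr (Multiset.mem_cons_self a J))
    rcases Multiset.mem_add.1 ha with h2 | h2
    · obtain ⟨I₂', rfl⟩ := Multiset.exists_cons_of_mem h2
      rw [Multiset.add_cons, Multiset.cons_add] at h
      obtain ⟨A, B, C, D, e1, e2, e3, e4⟩ := ih I₁ I₂' K₂ ((Multiset.cons_inj_right a).1 h)
      refine ⟨A, B, a ::ₘ C, D, e1, ?_, ?_, e4⟩
      · rw [e2, Multiset.cons_add]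
      · rw [e3, Multiset.add_cons]
    · obtain ⟨K₂', rfl⟩ := Multiset.exists_cons_of_mem h2
      rw [Multiset.add_cons, Multiset.add_cons] at h
      obtain ⟨A, B, C, D, e1, e2, e3, e4⟩ := ih I₁ I₂ K₂' ((Multiset.cons_inj_right a).1 h)
      refine ⟨A, B, C, a ::ₘ D, e1, ?_, e3, ?_⟩
      · rw [e2, Multiset.add_cons]
      · rw [e4, Multiset.add_cons]

lemma ne_zero_of_mem {a : β} {M : Multiset β} (h : a ∈ M) : M ≠ 0 := by
  rintro rfl; exact absurd h (Multiset.notMem_zero a)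

lemma mulLe_trans_core (ht : Transitive r) {I₁ J₁ K₁ I₂ J₂ K₂ : Multiset β}
    (hK₁ : ∀ k ∈ K₁, k ∈ dm r J₁) (hK₂ : ∀ k ∈ K₂, k ∈ dm r J₂)
    (hN : I₁ + J₁ = I₂ + K₂) :
    ∃ I J K : Multiset β, I₁ + K₁ = I + K ∧ I₂ + J₂ = I + J ∧ (∀ k ∈ K, k ∈ dm r J) ∧
      ((J₁ ≠ 0 ∨ J₂ ≠ 0) → J ≠ 0) := by
  obtain ⟨A, B, C, D, e1, e2, e3, e4⟩ := multiset_refine J₁ I₁ I₂ K₂ hN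
  refine ⟨A, C + J₂, B + K₁, ?_, ?_, ?_, ?_⟩
  · rw [e1]; abel
  · rw [e3]; abel
  · intro k hk
    rcases Multiset.mem_add.1 hk with hk | hk
    · have : k ∈ K₂ := by rw [e4]; exact Multiset.mem_add.2 (Or.inl hk)
      exact dm_le (Multiset.le_add_left _ _) (hK₂ k this)
    · obtain ⟨j, hj, hrj⟩ := hK₁ k hk
      have hj' : j ∈ C + D := by rwa [← e2]
      rcases Multiset.mem_add.1 hj' with hj' | hj'
      · exact ⟨j, Multiset.mem_add.2 (Or.inl hj'), hrj⟩
      · have : j ∈ K₂ := by rw [e4]; exact Multiset.mem_add.2 (Or.inr hj')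
        obtain ⟨j', hj'', hrj'⟩ := hK₂ j this
        exact ⟨j', Multiset.mem_add.2 (Or.inr hj''), ht hrj hrj'⟩
  · rintro (hJ | hJ)
    · rcases Multiset.exists_mem_of_ne_zero hJ with ⟨x, hx⟩
      have hx' : x ∈ C + D := by rwa [← e2]
      rcases Multiset.mem_add.1 hx' with hx' | hx'
      · exact ne_zero_of_mem (Multiset.mem_add.2 (Or.inl hx'))
      · have : x ∈ K₂ := by rw [e4]; exact Multiset.mem_add.2 (Or.inr hx')
        obtain ⟨j, hj, _⟩ := hK₂ x this
        exact ne_zero_of_mem (Multiset.mem_add.2 (Or.inr hj))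
    · rcases Multiset.exists_mem_of_ne_zero hJ with ⟨x, hx⟩
      exact ne_zero_of_mem (Multiset.mem_add.2 (Or.inr hx))

lemma mulLe_trans (ht : Transitive r) {M N P : Multiset β}
    (h1 : mulLe r M N) (h2 : mulLe r N P) : mulLe r M P := by
  obtain ⟨I₁, J₁, K₁, e11, e12, hK₁⟩ := h1
  obtain ⟨I₂, J₂, K₂, e21, e22, hK₂⟩ := h2
  obtain ⟨I, J, K, f1, f2, hK, _⟩ := mulLe_trans_core ht hK₁ hK₂ (by rw [← e12, ← e21])
  exact ⟨I, J, K, by rw [e11, f1], by rw [e22, f2], hK⟩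

lemma mulLt_of_le_of_lt (ht : Transitive r) {M N P : Multiset β}
    (h1 : mulLe r M N) (h2 : mulLt r N P) : mulLt r M P := by
  obtain ⟨I₁, J₁, K₁, e11, e12, hK₁⟩ := h1
  obtain ⟨I₂, J₂, K₂, e21, e22, hK₂, hJ₂⟩ := h2
  obtain ⟨I, J, K, f1, f2, hK, hJ⟩ := mulLe_trans_core ht hK₁ hK₂ (by rw [← e12, ← e21])
  exact ⟨I, J, K, by rw [e11, f1], by rw [e22, f2], hK, hJ (Or.inr hJ₂)⟩

lemma mulLt_of_lt_of_le (ht : Transitive r) {M N P : Multiset β}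
    (h1 : mulLt r M N) (h2 : mulLe r N P) : mulLt r M P := by
  obtain ⟨I₁, J₁, K₁, e11, e12, hK₁, hJ₁⟩ := h1
  obtain ⟨I₂, J₂, K₂, e21, e22, hK₂⟩ := h2
  obtain ⟨I, J, K, f1, f2, hK, hJ⟩ := mulLe_trans_core ht hK₁ hK₂ (by rw [← e12, ← e21])
  exact ⟨I, J, K, by rw [e11, f1], by rw [e22, f2], hK, hJ (Or.inl hJ₁)⟩

lemma mulLe_cancel_single (ht : Transitive r) (hirr : ∀ x, ¬ r x x) {a : β}
    {M N : Multiset β} (h : mulLe r ({a} + M) ({a} + N)) : mulLe r M N := by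
  obtain ⟨I, J, K, e1, e2, hK⟩ := h
  have haIK : a ∈ I + K := by
    rw [← e1]; exact Multiset.mem_add.2 (Or.inl (Multiset.mem_singleton_self a))
  rcases Multiset.mem_add.1 haIK with haI | haK
  · obtain ⟨I', rfl⟩ := Multiset.exists_cons_of_mem haI
    refine ⟨I', J, K, ?_, ?_, hK⟩
    · apply (Multiset.cons_inj_right a).1
      rw [show a ::ₘ M = {a} + M by simp [Multiset.singleton_add], e1]
      simp [Multiset.cons_add, Multiset.add_cons]
    · apply (Multiset.cons_inj_right a).1
      rw [show a ::ₘ N = {a} + N by simp [Multiset.singleton_add], e2]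
      simp [Multiset.cons_add, Multiset.add_cons]
  · obtain ⟨K', rfl⟩ := Multiset.exists_cons_of_mem haK
    have eM : M = I + K' := by
      apply (Multiset.cons_inj_right a).1
      rw [show a ::ₘ M = {a} + M by simp [Multiset.singleton_add], e1]
      simp [Multiset.cons_add, Multiset.add_cons]
    have hadm : a ∈ dm r J := hK a (Multiset.mem_cons_self a K')
    have haJI : a ∈ I + J := by
      rw [← e2]; exact Multiset.mem_add.2 (Or.inl (Multiset.mem_singleton_self a))
    rcases Multiset.mem_add.1 haJI with haI | haJ
    · obtain ⟨I', rfl⟩ := Multiset.exists_cons_of_mem haI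
      have eN : N = I' + J := by
        apply (Multiset.cons_inj_right a).1
        rw [show a ::ₘ N = {a} + N by simp [Multiset.singleton_add], e2]
        simp [Multiset.cons_add, Multiset.add_cons]
      refine ⟨I', J, a ::ₘ K', ?_, eN, ?_⟩
      · rw [eM]; simp [Multiset.cons_add, Multiset.add_cons]
      · intro k hk
        rcases Multiset.mem_cons.1 hk with rfl | hk
        · exact hadm
        · exact hK k (Multiset.mem_cons_of_mem hk)
    · obtain ⟨J', rfl⟩ := Multiset.exists_cons_of_mem haJ
      have eN : N = I + J' := by
        apply (Multiset.cons_inj_right a).1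
        rw [show a ::ₘ N = {a} + N by simp [Multiset.singleton_add], e2]
        simp [Multiset.cons_add, Multiset.add_cons]
      obtain ⟨j, hj, hrj⟩ := hadm
      have hjJ' : j ∈ J' := by
        rcases Multiset.mem_cons.1 hj with rfl | hj
        · exact absurd hrj (hirr _)
        · exact hj
      refine ⟨I, J', K', eM, eN, ?_⟩
      intro k hk
      obtain ⟨j₀, hj₀, hrj₀⟩ := hK k (Multiset.mem_cons_of_mem hk)
      rcases Multiset.mem_cons.1 hj₀ with rfl | hj₀
      · exact ⟨j, hjJ', ht hrj₀ hrj⟩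
      · exact ⟨j₀, hj₀, hrj₀⟩

lemma mulLe_cancel (ht : Transitive r) (hirr : ∀ x, ¬ r x x) (P : Multiset β)
    {M N : Multiset β} (h : mulLe r (P + M) (P + N)) : mulLe r M N := by
  induction P using Multiset.induction_on with
  | empty => simpa using h
  | cons a P ih =>
    apply ih
    apply mulLe_cancel_single ht hirr (a := a)
    have e : ∀ X : Multiset β, (a ::ₘ P) + X = {a} + (P + X) := by
      intro X; simp [Multiset.cons_add, Multiset.singleton_add, add_assoc]
    rwa [e M, e N] at h

lemma mulLe_single {M : Multiset β} {a : β} (h : mulLe r M {a}) :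
    M = {a} ∨ ∀ x ∈ M, r x a := by
  obtain ⟨I, J, K, e1, e2, hK⟩ := h
  have hI : I ≤ {a} := Multiset.le_iff_exists_add.2 ⟨J, e2⟩
  rcases Multiset.le_singleton.1 hI with rfl | rfl
  · right
    have hJ : J = {a} := by simpa using e2.symm
    subst hJ
    intro x hx
    have : x ∈ K := by simpa [e1] using hx
    obtain ⟨j, hj, hrj⟩ := hK x this
    rcases hj with hj
    have : j = a := by simpa using hj
    subst this; exact hrj
  · left
    have hJ : J = 0 := by
      have : ({a} : Multiset β) + 0 = {a} + J := by simpa using e2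
      exact (add_left_cancel this).symm
    subst hJ
    have hKz : K = 0 := by
      rw [Multiset.eq_zero_iff_forall_notMem]
      intro x hx
      obtain ⟨j, hj, _⟩ := hK x hx
      exact absurd hj (by simp [Multiset.notMem_zero])
    rw [e1, hKz, add_zero]

lemma mulLe_bound {M N : Multiset β} (h : mulLe r M N) {x : β} (hx : x ∈ M) :
    ∃ y ∈ N, x = y ∨ r x y := by
  obtain ⟨I, J, K, e1, e2, hK⟩ := h
  have : x ∈ I + K := by rwa [← e1]
  rcases Multiset.mem_add.1 this with hx' | hx'
  · exact ⟨x, by rw [e2]; exact Multiset.mem_add.2 (Or.inl hx'), Or.inl rfl⟩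
  · obtain ⟨j, hj, hrj⟩ := hK x hx'
    exact ⟨j, by rw [e2]; exact Multiset.mem_add.2 (Or.inr hj), Or.inr hrj⟩

lemma msub_mono (ht : Transitive r) (S : Set β) {M N : Multiset β} (h : mulLe r M N) :
    mulLe r (msub M (ds r S)) (msub N (ds r S)) := by
  obtain ⟨I, J, K, e1, e2, hK⟩ := h
  refine ⟨msub I (ds r S), msub J (ds r S), msub K (ds r S), ?_, ?_, ?_⟩
  · rw [e1, msub_add]
  · rw [e2, msub_add]
  · intro k hk
    obtain ⟨hkK, hkS⟩ := mem_msub.1 hk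
    obtain ⟨j, hj, hrj⟩ := hK k hkK
    have hjS : j ∉ ds r S := fun hjS => hkS (ds_down ht hjS hrj)
    exact ⟨j, mem_msub.2 ⟨hj, hjS⟩, hrj⟩

lemma mulLe_iff_eq_or_lt {M N : Multiset β} : mulLe r M N ↔ M = N ∨ mulLt r M N := by
  constructor
  · rintro ⟨I, J, K, e1, e2, hK⟩
    by_cases hJ : J = 0
    · subst hJ
      left
      have hKz : K = 0 := by
        rw [Multiset.eq_zero_iff_forall_notMem]
        intro x hx
        obtain ⟨j, hj, _⟩ := hK x hx
        exact absurd hj (by simp [Multiset.notMem_zero])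
      rw [e1, e2, hKz]
    · exact Or.inr ⟨I, J, K, e1, e2, hK, hJ⟩
  · rintro (rfl | h)
    · exact mulLe_refl M
    · exact mulLt_mulLe h

/-- `mulLt` embeds into the transitive closure of `CutExpand`. -/
lemma mulLt_cutExpand :
    ∀ J : Multiset β, J ≠ 0 → ∀ (K I : Multiset β), (∀ k ∈ K, k ∈ dm r J) →
      Relation.TransGen (Relation.CutExpand r) (I + K) (I + J) := by
  intro J
  induction J using Multiset.strongInductionOn with
  | _ J ih =>
    intro hJ K I hK
    classical
    obtain ⟨a, ha⟩ := Multiset.exists_mem_of_ne_zero hJ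
    obtain ⟨J', rfl⟩ := Multiset.exists_cons_of_mem ha
    by_cases hJ' : J' = 0
    · subst hJ'
      apply Relation.TransGen.single
      refine ⟨K, a, ?_, ?_⟩
      · intro x hx
        obtain ⟨j, hj, hrj⟩ := hK x hx
        have : j = a := by simpa using hj
        rwa [← this]
      · rw [Multiset.add_cons, ← Multiset.singleton_add]
        abel
    · set Ka := K.filter (fun x => r x a) with hKa
      set K' := K.filter (fun x => ¬ r x a) with hK'
      have hsplit : Ka + K' = K := Multiset.filter_add_not _ K
      have hK'sub : ∀ k ∈ K', k ∈ dm r J' := by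
        intro k hk
        obtain ⟨hkK, hkna⟩ := Multiset.mem_filter.1 hk
        obtain ⟨j, hj, hrj⟩ := hK k hkK
        rcases Multiset.mem_cons.1 hj with rfl | hj'
        · exact absurd hrj hkna
        · exact ⟨j, hj', hrj⟩
      have step1 : Relation.TransGen (Relation.CutExpand r) ((I + Ka) + K')
          ((I + Ka) + J') :=
        ih J' (Multiset.lt_cons_self J' a) hJ' K' (I + Ka) hK'sub
      have step2 : Relation.CutExpand r ((I + Ka) + J') (I + (a ::ₘ J')) := by
        refine ⟨Ka, a, ?_, ?_⟩
        · intro x hx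
          exact (Multiset.mem_filter.1 hx).2
        · rw [Multiset.add_cons, ← Multiset.singleton_add]
          abel
      have he : (I + K) = (I + Ka) + K' := by rw [← hsplit]; abel
      rw [he]
      exact Relation.TransGen.tail step1 step2

lemma mulLt_wf (hwf : WellFounded r) : WellFounded (mulLt r) := by
  apply Subrelation.wf (r := Relation.TransGen (Relation.CutExpand r))
  · rintro M N ⟨I, J, K, e1, e2, hK, hJ⟩
    rw [e1, e2]
    exact mulLt_cutExpand J hJ K I hK
  · exact hwf.cutExpand.transGen
section Lexmax

variable {r : β → β → Prop}

@[simp] lemma lexmax_nil : lexmax r [] = 0 := rfl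

lemma lexmax_cons (a : β) (σ : List β) :
    lexmax r (a :: σ) = {a} + msub (lexmax r σ) (ds r {a}) := rfl

@[simp] lemma lexmax_singleton (a : β) : lexmax r [a] = {a} := by
  rw [lexmax_cons, lexmax_nil, msub_zero, add_zero]

lemma lexmax_append (σ τ : List β) :
    lexmax r (σ ++ τ) = lexmax r σ + msub (lexmax r τ) (dl r σ) := by
  induction σ with
  | nil =>
    rw [List.nil_append, lexmax_nil, zero_add]
    rw [msub_eq_self]
    intro x _ hx
    obtain ⟨y, hy, _⟩ := hx
    simp at hy
  | cons a σ ih =>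
    rw [List.cons_append, lexmax_cons, ih, msub_add, msub_msub, lexmax_cons, dl_cons]
    rw [add_assoc]
    congr 2
    rw [Set.union_comm]

lemma mem_lexmax {σ : List β} {x : β} (h : x ∈ lexmax r σ) : x ∈ σ := by
  induction σ with
  | nil => simp at h
  | cons a σ ih =>
    rw [lexmax_cons] at h
    rcases Multiset.mem_add.1 h with h | h
    · simp at h; simp [h]
    · exact List.mem_cons.2 (Or.inr (ih (Multiset.mem_of_le (msub_le _ _) h)))

lemma le_lexmax (ht : Transitive r) {σ : List β} {x : β} (h : x ∈ σ) :
    ∃ y ∈ lexmax r σ, x = y ∨ r x y := by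
  induction σ with
  | nil => simp at h
  | cons a σ ih =>
    rcases List.mem_cons.1 h with rfl | h
    · exact ⟨x, by rw [lexmax_cons]; exact Multiset.mem_add.2 (Or.inl (by simp)), Or.inl rfl⟩
    · obtain ⟨y, hy, hxy⟩ := ih h
      by_cases hds : y ∈ ds r {a}
      · obtain ⟨z, hz, hrz⟩ := hds
        have hza : z = a := by simpa using hz
        subst hza
        refine ⟨z, by rw [lexmax_cons]; exact Multiset.mem_add.2 (Or.inl (by simp)), Or.inr ?_⟩
        rcases hxy with rfl | hxy
        · exact hrz
        · exact ht hxy hrz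
      · refine ⟨y, ?_, hxy⟩
        rw [lexmax_cons]
        exact Multiset.mem_add.2 (Or.inr (mem_msub.2 ⟨hy, hds⟩))

end Lexmax

section DecreasingLemmas

variable {r : β → β → Prop}

lemma Decreasing.mirror {τ σ σ' τ' : List β} (h : Decreasing r τ σ σ' τ') :
    Decreasing r σ τ τ' σ' :=
  ⟨by rw [add_comm]; exact h.2, by rw [add_comm]; exact h.1⟩

lemma decreasing_nil_left (σ : List β) : Decreasing r [] σ σ [] := by
  constructor
  · rw [List.append_nil, lexmax_nil, zero_add]
    exact mulLe_refl _
  · rw [List.nil_append, lexmax_nil, zero_add]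
    exact mulLe_refl _

lemma decreasing_nil_right (τ : List β) : Decreasing r τ [] [] τ :=
  (decreasing_nil_left τ).mirror

/-- extract from one component of a local decreasing diagram the bound on the joining sequence -/
lemma decreasing_extract (ht : Transitive r) (hirr : ∀ x, ¬ r x x) {l₁ l₂ : β} {π : List β}
    (h : mulLe r (lexmax r (l₂ :: π)) ({l₂} + {l₁})) :
    mulLe r (msub (lexmax r π) (ds r {l₂})) {l₁} := by
  rw [lexmax_cons] at h
  exact mulLe_cancel_single ht hirr h

/-- all labels in the joining sequence are bounded by the peak labels -/
lemma labels_bound (ht : Transitive r) {lb lc : β} {φ : List β}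
    (h : mulLe r (msub (lexmax r φ) (ds r {lb})) {lc}) :
    ∀ x ∈ φ, x = lc ∨ x ∈ ds r ({lb, lc} : Set β) := by
  intro x hx
  obtain ⟨y, hy, hxy⟩ := le_lexmax ht hx
  by_cases hds : y ∈ ds r {lb}
  · right
    obtain ⟨z, hz, hrz⟩ := hds
    have hza : z = lb := by simpa using hz
    subst hza
    refine ⟨z, Or.inl rfl, ?_⟩
    rcases hxy with rfl | hxy
    · exact hrz
    · exact ht hxy hrz
  · obtain ⟨w, hw, hyw⟩ := mulLe_bound h (mem_msub.2 ⟨hy, hds⟩)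
    have hwlc : w = lc := by simpa using hw
    rcases hyw with rfl | hyw
    · rcases hxy with rfl | hxy
      · exact Or.inl hwlc
      · exact Or.inr ⟨y, Or.inr hwlc, hxy⟩
    · rcases hxy with rfl | hxy
      · exact Or.inr ⟨w, Or.inr hwlc, hyw⟩
      · exact Or.inr ⟨w, Or.inr hwlc, ht hxy hyw⟩

end DecreasingLemmas
section Pasting

variable {r : β → β → Prop}

lemma mulLe_congr {M M' N N' : Multiset β} (hM : M = M') (hN : N = N')
    (h : mulLe r M' N') : mulLe r M N := hM ▸ hN ▸ h

/-- The pasting lemma for decreasing diagrams. -/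
lemma pasting (ht : Transitive r) (hirr : ∀ x, ¬ r x x) {τa τb σ φ ψ φ' ψ' : List β}
    (h1 : Decreasing r τa σ φ ψ) (h2 : Decreasing r τb φ φ' ψ') :
    Decreasing r (τa ++ τb) σ φ' (ψ ++ ψ') := by
  obtain ⟨h1a, h1b⟩ := h1
  obtain ⟨h2a, h2b⟩ := h2
  have hφσ : mulLe r (msub (lexmax r φ) (dl r τa)) (lexmax r σ) := by
    rw [lexmax_append] at h1b
    exact mulLe_cancel ht hirr _ h1b
  have hψ'τb : mulLe r (msub (lexmax r ψ') (dl r φ)) (lexmax r τb) := by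
    rw [lexmax_append, add_comm (lexmax r τb) (lexmax r φ)] at h2a
    exact mulLe_cancel ht hirr _ h2a
  constructor
  · -- hard component : |σ ++ (ψ ++ ψ')| ≼ |τa ++ τb| + |σ|
    rw [← List.append_assoc, lexmax_append (σ ++ ψ) ψ']
    set R := msub (lexmax r ψ') (dl r (σ ++ ψ)) with hR
    set E := mfil R (dl r φ) with hE
    set W := msub (lexmax r τb) (dl r (σ ++ ψ)) with hW
    set F := mfil W (dl r τa) with hF
    obtain ⟨I₀, J₀, K₀, e01, e02, hK₀⟩ := h1a
    have absorb : ∀ x : β, x ∉ dl r (σ ++ ψ) →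
        (∃ u ∈ lexmax r τa + lexmax r σ, r x u) → x ∈ dm r J₀ := by
      rintro x hnot ⟨u, hu, hxu⟩
      have hu' : u ∈ I₀ + J₀ := by rw [← e02]; exact hu
      rcases Multiset.mem_add.1 hu' with huI | huJ
      · exfalso
        apply hnot
        have : u ∈ lexmax r (σ ++ ψ) := by
          rw [e01]; exact Multiset.mem_add.2 (Or.inl huI)
        exact ⟨u, mem_lexmax this, hxu⟩
      · exact ⟨u, huJ, hxu⟩
    have keyF : ∀ x ∈ F, x ∈ dm r J₀ := by
      intro x hx
      obtain ⟨hxW, hxdl⟩ := mem_mfil.1 hx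
      have hxnot : x ∉ dl r (σ ++ ψ) := (mem_msub.1 hxW).2
      obtain ⟨t, htmem, hxt⟩ := hxdl
      obtain ⟨u, hu, htu⟩ := le_lexmax ht htmem
      refine absorb x hxnot ⟨u, Multiset.mem_add.2 (Or.inl hu), ?_⟩
      rcases htu with rfl | htu
      · exact hxt
      · exact ht hxt htu
    have keyE : ∀ x ∈ E, x ∈ dm r J₀ := by
      intro x hx
      obtain ⟨hxR, hxdl⟩ := mem_mfil.1 hx
      have hxnot : x ∉ dl r (σ ++ ψ) := (mem_msub.1 hxR).2
      obtain ⟨y, hyφ, hxy⟩ := hxdl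
      obtain ⟨z, hz, hyz⟩ := le_lexmax ht hyφ
      have hxz : r x z := by
        rcases hyz with rfl | hyz
        · exact hxy
        · exact ht hxy hyz
      by_cases hzdl : z ∈ dl r τa
      · obtain ⟨t, htmem, hzt⟩ := hzdl
        obtain ⟨u, hu, htu⟩ := le_lexmax ht htmem
        refine absorb x hxnot ⟨u, Multiset.mem_add.2 (Or.inl hu), ?_⟩
        rcases htu with rfl | htu
        · exact ht hxz hzt
        · exact ht (ht hxz hzt) htu
      · obtain ⟨w, hw, hzw⟩ := mulLe_bound hφσ (mem_msub.2 ⟨hz, hzdl⟩)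
        refine absorb x hxnot ⟨w, Multiset.mem_add.2 (Or.inr hw), ?_⟩
        rcases hzw with rfl | hzw
        · exact hxz
        · exact ht hxz hzw
    -- now chain the inequalities
    have c1 : mulLe r (lexmax r (σ ++ ψ) + R)
        (lexmax r (σ ++ ψ) + (W + E)) := by
      apply mulLe_add (mulLe_refl _)
      have : R = msub R (dl r φ) + E := (msub_add_mfil R (dl r φ)).symm
      rw [this]
      apply mulLe_add _ (mulLe_refl E)
      have hR1 : msub R (dl r φ) = msub (msub (lexmax r ψ') (dl r φ)) (dl r (σ ++ ψ)) := by
        rw [hR, msub_msub, msub_msub, Set.union_comm]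
      rw [hR1]
      exact msub_mono ht _ hψ'τb
    have c2 : mulLe r (lexmax r (σ ++ ψ) + (W + E))
        (lexmax r (σ ++ ψ) + ((msub (lexmax r τb) (dl r τa) + F) + E)) := by
      apply mulLe_add (mulLe_refl _)
      apply mulLe_add _ (mulLe_refl E)
      have : W = msub W (dl r τa) + F := (msub_add_mfil W (dl r τa)).symm
      rw [this]
      apply mulLe_add _ (mulLe_refl F)
      apply mulLe_of_le
      rw [hW, msub_msub, Set.union_comm, ← msub_msub]
      exact msub_le _ _
    have c3 : mulLe r (lexmax r (σ ++ ψ) + ((msub (lexmax r τb) (dl r τa) + F) + E))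
        (lexmax r (τa ++ τb) + lexmax r σ) := by
      refine ⟨I₀ + msub (lexmax r τb) (dl r τa), J₀, K₀ + (F + E), ?_, ?_, ?_⟩
      · rw [e01]; abel
      · have : lexmax r (τa ++ τb) + lexmax r σ =
            (lexmax r τa + lexmax r σ) + msub (lexmax r τb) (dl r τa) := by
          rw [lexmax_append]; abel
        rw [this, e02]; abel
      · intro k hk
        rcases Multiset.mem_add.1 hk with hk | hk
        · exact hK₀ k hk
        · rcases Multiset.mem_add.1 hk with hk | hk
          · exact keyF k hk
          · exact keyE k hk
    exact mulLe_trans ht c1 (mulLe_trans ht c2 c3)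
  · -- easy component : |(τa ++ τb) ++ φ'| ≼ |τa ++ τb| + |σ|
    rw [List.append_assoc, lexmax_append τa (τb ++ φ')]
    have hmono : mulLe r (msub (lexmax r (τb ++ φ')) (dl r τa))
        (msub (lexmax r τb) (dl r τa) + msub (lexmax r φ) (dl r τa)) := by
      rw [← msub_add]
      exact msub_mono ht _ h2b
    have c1 : mulLe r (lexmax r τa + msub (lexmax r (τb ++ φ')) (dl r τa))
        (lexmax r τa + (msub (lexmax r τb) (dl r τa) + msub (lexmax r φ) (dl r τa))) :=
      mulLe_add (mulLe_refl _) hmono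
    have c2 : mulLe r
        (lexmax r τa + (msub (lexmax r τb) (dl r τa) + msub (lexmax r φ) (dl r τa)))
        (lexmax r (τa ++ τb) + lexmax r σ) := by
      have e : lexmax r (τa ++ τb) + lexmax r σ =
          (lexmax r τa + msub (lexmax r τb) (dl r τa)) + lexmax r σ := by
        rw [lexmax_append]
      rw [e]
      have base := mulLe_add (mulLe_refl (lexmax r τa + msub (lexmax r τb) (dl r τa))) hφσ
      exact mulLe_congr (by abel) rfl base
    exact mulLe_trans ht c1 c2

end Pasting
section Measures

variable {r : β → β → Prop}

lemma mem_ds_singleton {a x : β} (h : x ∈ ds r ({a} : Set β)) : r x a := by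
  obtain ⟨z, hz, hr⟩ := h
  have : z = a := by simpa using hz
  rwa [this] at hr

lemma measure1 {lb lc : β} {τ₁ σ₁ φ : List β}
    (hD2 : mulLe r (msub (lexmax r φ) (ds r ({lb} : Set β))) {lc}) :
    mulLt r (lexmax r τ₁ + lexmax r φ) (lexmax r (lb :: τ₁) + lexmax r (lc :: σ₁)) := by
  obtain ⟨I₆, J₆, K₆, e1, e2, hK₆⟩ := hD2
  have hlbJ : lb ∈ ({lb} : Multiset β) + (J₆ + msub (lexmax r σ₁) (ds r ({lc} : Set β))) :=
    Multiset.mem_add.2 (Or.inl (Multiset.mem_singleton_self lb))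
  refine ⟨msub (lexmax r τ₁) (ds r ({lb} : Set β)) + I₆,
      {lb} + (J₆ + msub (lexmax r σ₁) (ds r ({lc} : Set β))),
      K₆ + (mfil (lexmax r τ₁) (ds r ({lb} : Set β)) + mfil (lexmax r φ) (ds r ({lb} : Set β))),
      ?_, ?_, ?_, ?_⟩
  · conv_lhs => rw [← msub_add_mfil (lexmax r τ₁) (ds r ({lb} : Set β)),
      ← msub_add_mfil (lexmax r φ) (ds r ({lb} : Set β))]
    rw [e1]; abel
  · rw [lexmax_cons, lexmax_cons, e2]; abel
  · intro k hk
    rcases Multiset.mem_add.1 hk with hk | hk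
    · apply dm_le _ (hK₆ k hk)
      exact Multiset.le_iff_exists_add.2 ⟨{lb} + msub (lexmax r σ₁) (ds r ({lc} : Set β)),
        by abel⟩
    · rcases Multiset.mem_add.1 hk with hk | hk
      · exact ⟨lb, hlbJ, mem_ds_singleton (mem_mfil.1 hk).2⟩
      · exact ⟨lb, hlbJ, mem_ds_singleton (mem_mfil.1 hk).2⟩
  · exact ne_zero_of_mem hlbJ

lemma measure2 (ht : Transitive r) {lb lc : β} {τ₁ σ₁ φ ψ θ : List β}
    (hD1 : mulLe r (msub (lexmax r ψ) (ds r ({lc} : Set β))) {lb})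
    (hφb : ∀ x ∈ φ, x = lc ∨ x ∈ ds r ({lb, lc} : Set β))
    (hE1 : mulLe r (msub (lexmax r θ) (dl r φ)) (lexmax r τ₁)) :
    mulLt r (lexmax r σ₁ + lexmax r (ψ ++ θ)) (lexmax r (lb :: τ₁) + lexmax r (lc :: σ₁)) := by
  set msτ := msub (lexmax r τ₁) (ds r ({lb} : Set β)) with hmsτ
  set msσ := msub (lexmax r σ₁) (ds r ({lc} : Set β)) with hmsσ
  set s1 := mfil (lexmax r σ₁) (ds r ({lc} : Set β)) with hs1
  set msψ := msub (lexmax r ψ) (ds r ({lc} : Set β)) with hmsψ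
  set pψ := mfil (lexmax r ψ) (ds r ({lc} : Set β)) with hpψ
  set Q := msub (lexmax r θ) (dl r ψ) with hQdef
  set P := mfil Q (dl r φ) with hPdef
  set H := msub Q (dl r φ) with hHdef
  have hQ : H + P = Q := msub_add_mfil Q (dl r φ)
  set W := msub (lexmax r τ₁) (dl r ψ) with hWdef
  have hH : mulLe r H W := by
    have e : H = msub (msub (lexmax r θ) (dl r φ)) (dl r ψ) := by
      rw [hHdef, hQdef, msub_msub, msub_msub, Set.union_comm]
    rw [e, hWdef]
    exact msub_mono ht _ hE1
  set F := mfil W (ds r ({lb} : Set β)) with hFdef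
  set G := msub W (ds r ({lb} : Set β)) with hGdef
  have hWsplit : G + F = W := msub_add_mfil W _
  have hG : G ≤ msτ := by
    rw [hGdef, hWdef, hmsτ, msub_msub, Set.union_comm, ← msub_msub]
    exact msub_le _ _
  have hP : ∀ x ∈ P, x ∈ ds r ({lb, lc} : Set β) ∧ x ∉ dl r ψ := by
    intro x hx
    obtain ⟨hxQ, hxφ⟩ := mem_mfil.1 hx
    have hxψ : x ∉ dl r ψ := (mem_msub.1 hxQ).2
    obtain ⟨y, hyφ, hxy⟩ := hxφ
    rcases hφb y hyφ with rfl | hy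
    · exact ⟨⟨y, Or.inr rfl, hxy⟩, hxψ⟩
    · exact ⟨ds_down ht hy hxy, hxψ⟩
  -- the chain of non-strict inequalities
  have start : lexmax r σ₁ + lexmax r (ψ ++ θ) = (msσ + s1) + ((msψ + pψ) + (H + P)) := by
    rw [lexmax_append, hQ, ← hQdef]
    conv_lhs => rw [← msub_add_mfil (lexmax r σ₁) (ds r ({lc} : Set β)),
      ← msub_add_mfil (lexmax r ψ) (ds r ({lc} : Set β))]
  have chain : mulLe r (lexmax r σ₁ + lexmax r (ψ ++ θ))
      (msσ + s1 + msψ + pψ + msτ + F + P) := by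
    rw [start]
    have c1 : mulLe r ((msσ + s1) + ((msψ + pψ) + (H + P)))
        ((msσ + s1) + ((msψ + pψ) + ((G + F) + P))) := by
      apply mulLe_add (mulLe_refl _)
      apply mulLe_add (mulLe_refl _)
      apply mulLe_add _ (mulLe_refl P)
      rw [hWsplit]
      exact hH
    have c2 : mulLe r ((msσ + s1) + ((msψ + pψ) + ((G + F) + P)))
        (msσ + s1 + msψ + pψ + msτ + F + P) := by
      have base : mulLe r G msτ := mulLe_of_le hG
      have := mulLe_add (mulLe_refl (msσ + s1 + msψ + pψ)) (mulLe_add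
        (mulLe_add base (mulLe_refl F)) (mulLe_refl P))
      exact mulLe_congr (by abel) (by abel) this
    exact mulLe_trans ht c1 c2
  -- strict comparison of the bound with the measure of the original peak
  have hlt : mulLt r (msσ + s1 + msψ + pψ + msτ + F + P)
      (lexmax r (lb :: τ₁) + lexmax r (lc :: σ₁)) := by
    rcases mulLe_single hD1 with heq | hcase
    · -- msψ = {lb} : the label lb occurs in ψ
      have hlbψ : lb ∈ ψ := by
        apply mem_lexmax (r := r)
        apply Multiset.mem_of_le (msub_le (lexmax r ψ) (ds r ({lc} : Set β)))
        rw [← hmsψ, heq]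
        exact Multiset.mem_singleton_self lb
      have hdlb : ds r ({lb} : Set β) ⊆ dl r ψ := by
        apply ds_mono
        intro z hz
        have : z = lb := by simpa using hz
        rw [this]; exact hlbψ
      have hF0 : F = 0 := by
        rw [Multiset.eq_zero_iff_forall_notMem]
        intro x hx
        obtain ⟨hxW, hxlb⟩ := mem_mfil.1 hx
        exact (mem_msub.1 hxW).2 (hdlb hxlb)
      have hPc : ∀ x ∈ P, r x lc := by
        intro x hx
        obtain ⟨hds, hxψ⟩ := hP x hx
        obtain ⟨z, hz, hr⟩ := hds
        rcases hz with rfl | hz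
        · exact absurd (hdlb ⟨z, rfl, hr⟩) hxψ
        · have : z = lc := by simpa using hz
          rwa [this] at hr
      have hlcJ : lc ∈ ({lc} : Multiset β) := Multiset.mem_singleton_self lc
      refine ⟨msτ + msσ + {lb}, {lc}, s1 + pψ + P, ?_, ?_, ?_, ?_⟩
      · rw [heq, hF0]; abel
      · rw [lexmax_cons, lexmax_cons, ← hmsτ, ← hmsσ]; abel
      · intro k hk
        rcases Multiset.mem_add.1 hk with hk | hk
        · rcases Multiset.mem_add.1 hk with hk | hk
          · exact ⟨lc, hlcJ, mem_ds_singleton (mem_mfil.1 hk).2⟩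
          · exact ⟨lc, hlcJ, mem_ds_singleton (mem_mfil.1 hk).2⟩
        · exact ⟨lc, hlcJ, hPc k hk⟩
      · exact ne_zero_of_mem hlcJ
    · -- every element of msψ is below lb
      have hlbJ : lb ∈ ({lb} : Multiset β) + {lc} :=
        Multiset.mem_add.2 (Or.inl (Multiset.mem_singleton_self lb))
      have hlcJ : lc ∈ ({lb} : Multiset β) + {lc} :=
        Multiset.mem_add.2 (Or.inr (Multiset.mem_singleton_self lc))
      refine ⟨msτ + msσ, {lb} + {lc}, msψ + (s1 + pψ + F + P), ?_, ?_, ?_, ?_⟩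
      · abel
      · rw [lexmax_cons, lexmax_cons, ← hmsτ, ← hmsσ]; abel
      · intro k hk
        rcases Multiset.mem_add.1 hk with hk | hk
        · exact ⟨lb, hlbJ, hcase k hk⟩
        · rcases Multiset.mem_add.1 hk with hk | hk
          · rcases Multiset.mem_add.1 hk with hk | hk
            · rcases Multiset.mem_add.1 hk with hk | hk
              · exact ⟨lc, hlcJ, mem_ds_singleton (mem_mfil.1 hk).2⟩
              · exact ⟨lc, hlcJ, mem_ds_singleton (mem_mfil.1 hk).2⟩
            · exact ⟨lb, hlbJ, mem_ds_singleton (mem_mfil.1 hk).2⟩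
          · obtain ⟨hds, _⟩ := hP k hk
            obtain ⟨z, hz, hr⟩ := hds
            rcases hz with rfl | hz
            · exact ⟨z, hlbJ, hr⟩
            · have : z = lc := by simpa using hz
              rw [this] at hr
              exact ⟨lc, hlcJ, hr⟩
      · exact ne_zero_of_mem hlbJ
  exact mulLt_of_le_of_lt ht chain hlt

end Measures
section Main

variable {r : β → β → Prop} {B : α → β → α → Prop}

lemma lseq_append {a b c : α} {σ τ : List β} (h1 : LSeq B a σ b) (h2 : LSeq B b τ c) :
    LSeq B a (σ ++ τ) c := by
  induction h1 with
  | nil => exact h2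
  | cons hstep _ ih => exact LSeq.cons hstep (ih h2)

/-- Main lemma: every peak of a locally decreasing labeled ARS can be completed into
a decreasing diagram. -/
lemma main_peak (ht : Transitive r) (hwf : WellFounded r)
    (hpeak : ∀ (a b c : α) (lb lc : β), B a lb b → B a lc c →
      ∃ (d : α) (σ' τ' : List β),
        LSeq B b σ' d ∧ LSeq B c τ' d ∧ Decreasing r [lb] [lc] σ' τ') :
    ∀ (M : Multiset β) (a b c : α) (τ σ : List β), lexmax r τ + lexmax r σ = M →
      LSeq B a τ b → LSeq B a σ c →
      ∃ (d : α) (σ' τ' : List β),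
        LSeq B b σ' d ∧ LSeq B c τ' d ∧ Decreasing r τ σ σ' τ' := by
  have hirr : ∀ x, ¬ r x x := fun x => (hwf.isIrrefl).irrefl x
  intro M
  induction M using WellFounded.induction (hwf := mulLt_wf hwf) with
  | _ M IH =>
  intro a b c τ σ hM hτ hσ
  cases hτ with
  | nil => exact ⟨c, σ, [], hσ, LSeq.nil c, decreasing_nil_left σ⟩
  | @cons _ b₀ _ lb τ₁ hstep hrest =>
    cases hσ with
    | nil =>
      exact ⟨b, [], lb :: τ₁, LSeq.nil b, LSeq.cons hstep hrest, decreasing_nil_right _⟩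
    | @cons _ c₀ _ lc σ₁ hstep' hrest' =>
      obtain ⟨d₀, φ, ψ, hφ, hψ, hD⟩ := hpeak a b₀ c₀ lb lc hstep hstep'
      have hD1 : mulLe r (msub (lexmax r ψ) (ds r ({lc} : Set β))) {lb} := by
        have h := hD.1
        rw [show ([lc] ++ ψ : List β) = lc :: ψ from rfl, lexmax_singleton,
          lexmax_singleton, add_comm ({lb} : Multiset β) {lc}] at h
        exact decreasing_extract ht hirr h
      have hD2 : mulLe r (msub (lexmax r φ) (ds r ({lb} : Set β))) {lc} := by
        have h := hD.2
        rw [show ([lb] ++ φ : List β) = lb :: φ from rfl, lexmax_singleton,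
          lexmax_singleton] at h
        exact decreasing_extract ht hirr h
      subst hM
      obtain ⟨d₁, la, lβ, hla, hlβ, hDab⟩ :=
        IH _ (measure1 (σ₁ := σ₁) (lc := lc) hD2) b₀ b d₀ τ₁ φ rfl hrest hφ
      have hE1 : mulLe r (msub (lexmax r lβ) (dl r φ)) (lexmax r τ₁) := by
        have h := hDab.1
        rw [lexmax_append, add_comm (lexmax r τ₁) (lexmax r φ)] at h
        exact mulLe_cancel ht hirr _ h
      have hφb := labels_bound ht hD2
      obtain ⟨d₂, lγ, lδ, hlγ, hlδ, hDgd⟩ :=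
        IH _ (measure2 ht hD1 hφb hE1) c₀ c d₁ σ₁ (ψ ++ lβ) rfl hrest' (lseq_append hψ hlβ)
      have paste1 : Decreasing r ([lb] ++ τ₁) [lc] la (ψ ++ lβ) :=
        pasting ht hirr hD hDab
      have paste2 : Decreasing r ([lc] ++ σ₁) (lb :: τ₁) lγ (la ++ lδ) := by
        have h1 : Decreasing r [lc] (lb :: τ₁) (ψ ++ lβ) la := by
          have := paste1.mirror
          rwa [show ([lb] ++ τ₁ : List β) = lb :: τ₁ from rfl] at this
        exact pasting ht hirr h1 hDgd
      refine ⟨d₂, la ++ lδ, lγ, lseq_append hla hlδ, hlγ, ?_⟩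
      have := paste2.mirror
      rwa [show ([lc] ++ σ₁ : List β) = lc :: σ₁ from rfl] at this

end Main

/-- every locally decreasing ARS is confluent -/
theorem locally_decreasing_imp_confluent {α : Type u} {β : Type v} (A : α → α → Prop)
    (h : ∃ (r : β → β → Prop) (B : α → β → α → Prop),
      Transitive r ∧ WellFounded r ∧
      (∀ a c : α, A a c ↔ ∃ l : β, B a l c) ∧
      (∀ (a b c : α) (lb lc : β), B a lb b → B a lc c →
        ∃ (d : α) (σ' τ' : List β),
          LSeq B b σ' d ∧ LSeq B c τ' d ∧ Decreasing r [lb] [lc] σ' τ')) :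
    Confluent A := by
  obtain ⟨r, B, ht, hwf, hAB, hpeak⟩ := h
  have to_lseq : ∀ {a b : α}, ReflTransGen A a b → ∃ σ, LSeq B a σ b := by
    intro a b hab
    induction hab with
    | refl => exact ⟨[], LSeq.nil _⟩
    | tail _ hstep ih =>
      obtain ⟨σ, hσ⟩ := ih
      obtain ⟨l, hl⟩ := (hAB _ _).1 hstep
      exact ⟨σ ++ [l], lseq_append hσ (LSeq.cons hl (LSeq.nil _))⟩
  have of_lseq : ∀ {a b : α} {σ : List β}, LSeq B a σ b → ReflTransGen A a b := by
    intro a b σ hab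
    induction hab with
    | nil => exact ReflTransGen.refl
    | cons hstep _ ih => exact ReflTransGen.head ((hAB _ _).2 ⟨_, hstep⟩) ih
  intro a b c hab hac
  obtain ⟨τ, hτ⟩ := to_lseq hab
  obtain ⟨σ, hσ⟩ := to_lseq hac
  obtain ⟨d, σ', τ', hbd, hcd, _⟩ :=
    main_peak ht hwf hpeak (lexmax r τ + lexmax r σ) a b c τ σ rfl hτ hσ
  exact ⟨d, of_lseq hbd, of_lseq hcd⟩
end MulOrder
end

section
/- For finite multisets M, N over a type with a transitive irreflexive relation ≺: if M ≼_mul N then there exist multisets I, J, K with M = I + K, N = I + J, every element of K lying in ds J, and moreover the multiset intersection of J and K is empty. -/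
open Relation

universe u v

variable {α : Type u} {β : Type v}

theorem mulLe_disjoint_aux {β : Type v} [DecidableEq β] (r : β → β → Prop)
    (htrans : Transitive r) (hirrefl : Irreflexive r) :
    ∀ n (M N I J K : Multiset β), Multiset.card K = n → M = I + K → N = I + J →
      (∀ k ∈ K, k ∈ dm r J) →
      ∃ I' J' K' : Multiset β, M = I' + K' ∧ N = I' + J' ∧
        (∀ k ∈ K', k ∈ dm r J') ∧ J' ∩ K' = 0 := by
  intro n
  induction n using Nat.strong_induction_on with
  | _ n ih =>
    intro M N I J K hcard hM hN hK
    by_cases hJK : J ∩ K = 0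
    · exact ⟨I, J, K, hM, hN, hK, hJK⟩
    · obtain ⟨a, ha⟩ := Multiset.exists_mem_of_ne_zero hJK
      have haJ : a ∈ J := (Multiset.mem_inter.mp ha).1
      have haK : a ∈ K := (Multiset.mem_inter.mp ha).2
      have hM' : M = (I + {a}) + K.erase a := by
        rw [hM, add_assoc, Multiset.singleton_add, Multiset.cons_erase haK]
      have hN' : N = (I + {a}) + J.erase a := by
        rw [hN, add_assoc, Multiset.singleton_add, Multiset.cons_erase haJ]
      have hK' : ∀ k ∈ K.erase a, k ∈ dm r (J.erase a) := by
        intro k hk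
        have hkK : k ∈ K := Multiset.mem_of_mem_erase hk
        obtain ⟨b, hbJ, hrb⟩ := hK k hkK
        by_cases hba : b = a
        · subst hba
          obtain ⟨c, hcJ, hrc⟩ := hK b haK
          have hcb : c ≠ b := fun h => hirrefl c (h ▸ hrc)
          exact ⟨c, (Multiset.mem_erase_of_ne hcb).mpr hcJ, htrans hrb hrc⟩
        · exact ⟨b, (Multiset.mem_erase_of_ne hba).mpr hbJ, hrb⟩
      exact ih (Multiset.card (K.erase a))
        (by rw [← hcard]; exact Multiset.card_lt_card (Multiset.erase_lt.mpr haK))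
        M N (I + {a}) (J.erase a) (K.erase a) rfl hM' hN' hK'

/-- `≼_mul` witnesses can be chosen with `J ∩ K = ∅` -/
theorem mulLe_witnesses_disjoint {β : Type v} [DecidableEq β] (r : β → β → Prop)
    (htrans : Transitive r) (hirrefl : Irreflexive r) (M N : Multiset β)
    (h : mulLe r M N) :
    ∃ I J K : Multiset β, M = I + K ∧ N = I + J ∧ (∀ k ∈ K, k ∈ dm r J) ∧
      J ∩ K = 0 := by
  obtain ⟨I, J, K, hM, hN, hK⟩ := h
  exact mulLe_disjoint_aux r htrans hirrefl (Multiset.card K) M N I J K rfl hM hN hK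
end

section
/- For finite multisets M, N and any set S of labels over a type with a transitive irreflexive relation ≺: if M ≼_mul N then (M -s ds S) ≼_mul (N -s ds S). -/
open Relation

universe u v

variable {α : Type u} {β : Type v}

/-- `≼_mul` is preserved by removing a down-set from both sides -/
theorem mulLe_msub_ds {β : Type v} (r : β → β → Prop)
    (htrans : Transitive r) (hirrefl : Irreflexive r) (M N : Multiset β)
    (S : Set β) (h : mulLe r M N) :
    mulLe r (msub M (ds r S)) (msub N (ds r S)) := by
  obtain ⟨I, J, K, hM, hN, hK⟩ := h
  refine ⟨msub I (ds r S), msub J (ds r S), msub K (ds r S), ?_, ?_, ?_⟩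
  · simp [hM, msub, Multiset.filter_add]
  · simp [hN, msub, Multiset.filter_add]
  · intro k hk
    simp only [msub, Multiset.mem_filter] at hk
    obtain ⟨hkK, hknd⟩ := hk
    obtain ⟨j, hjJ, hrkj⟩ := hK k hkK
    refine ⟨j, ?_, hrkj⟩
    simp only [Set.mem_setOf_eq, msub, Multiset.mem_filter]
    refine ⟨hjJ, fun hjd => hknd ?_⟩
    obtain ⟨a, haS, hrja⟩ := hjd
    exact ⟨a, haS, htrans hrkj hrja⟩
end

section
/- For finite multisets M, N, Q over a type with a transitive irreflexive relation ≺: if every element of Q lies in (ds N) \ (ds M) and M ≼_mul N, then Q + M ≼_mul N. -/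
open Relation

universe u v

variable {α : Type u} {β : Type v}

theorem dm_add (r : β → β → Prop) (M N : Multiset β) :
    dm r (M + N) = dm r M ∪ dm r N := by
  ext b
  simp only [dm, ds, Multiset.mem_add, Set.mem_ofPred_eq, Set.mem_union, or_and_right, exists_or]

theorem mulLe_add_of_mem_diff_general {β : Type v} (r : β → β → Prop) (M N Q : Multiset β)
    (hQ : ∀ q ∈ Q, q ∈ dm r N \ dm r M) (h : mulLe r M N) :
    mulLe r (Q + M) N := by
  obtain ⟨I, J, K, rfl, rfl, hK⟩ := h
  refine ⟨I, J, Q + K, add_left_comm Q I K, rfl, fun k hk => ?_⟩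
  rcases Multiset.mem_add.mp hk with hkQ | hkK
  · obtain ⟨hkN, hkM⟩ := hQ k hkQ
    rw [dm_add] at hkN hkM
    exact hkN.resolve_left fun hkI => hkM (Or.inl hkI)
  · exact hK k hkK

/-- if every element of `Q` lies in `ds N \ ds M` and `M ≼_mul N`,
then `Q + M ≼_mul N` -/
theorem mulLe_add_of_mem_diff {β : Type v} (r : β → β → Prop)
    (htrans : Transitive r) (hirrefl : Irreflexive r) (M N Q : Multiset β)
    (hQ : ∀ q ∈ Q, q ∈ dm r N \ dm r M) (h : mulLe r M N) :
    mulLe r (Q + M) N :=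
  mulLe_add_of_mem_diff_general r M N Q hQ h
end

section
/- For the lexicographic maximum measure with respect to a transitive irreflexive relation ≺: (1) for every list σ of labels, the down-set of the multiset |σ| equals the down-set of σ, i.e., ds |σ| = ds σ; (2) for all lists σ, τ of labels, |σ ++ τ| = |σ| + (|τ| -s ds σ). -/
open Relation

universe u v

variable {α : Type u} {β : Type v}

/-- properties of the lexicographic maximum measure -/
theorem lexmax_dm_and_append {β : Type v} (r : β → β → Prop)
    (htrans : Transitive r) (hirrefl : Irreflexive r) :
    (∀ σ : List β, dm r (lexmax r σ) = dl r σ) ∧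
    (∀ σ τ : List β, lexmax r (σ ++ τ) = lexmax r σ + msub (lexmax r τ) (dl r σ)) := by
  classical
  have filter_ext : ∀ (p q : β → Prop) (Dp : DecidablePred p) (Dq : DecidablePred q),
      (∀ a, p a ↔ q a) → ∀ M : Multiset β,
      @Multiset.filter β p Dp M = @Multiset.filter β q Dq M := by
    intro p q Dp Dq h M
    have hpq : p = q := funext fun a => propext (h a)
    subst hpq
    congr
  have hmem : ∀ (M : Multiset β) (S : Set β) (b : β), b ∈ msub M S ↔ b ∈ M ∧ b ∉ S := by
    intro M S b
    simp [msub, Multiset.mem_filter]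
  have hmsub_add : ∀ (M N : Multiset β) (S : Set β),
      msub (M + N) S = msub M S + msub N S := by
    intro M N S
    simp [msub, Multiset.filter_add]
  have hmsub_msub : ∀ (M : Multiset β) (S T : Set β),
      msub (msub M S) T = msub M (S ∪ T) := by
    intro M S T
    simp only [msub, Multiset.filter_filter]
    apply filter_ext
    intro x
    constructor
    · rintro ⟨h1, h2⟩ (h | h) <;> [exact h2 h; exact h1 h]
    · intro h
      exact ⟨fun hx => h (Or.inr hx), fun hx => h (Or.inl hx)⟩
  have hdl_cons : ∀ (a : β) (σ : List β), dl r (a :: σ) = ds r {a} ∪ dl r σ := by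
    intro a σ
    ext x
    simp only [dl, ds, List.mem_cons, Set.mem_union, Set.mem_setOf_eq, Set.mem_singleton_iff]
    constructor
    · rintro ⟨c, (rfl | hc), hr⟩
      · exact Or.inl ⟨c, rfl, hr⟩
      · exact Or.inr ⟨c, hc, hr⟩
    · rintro (⟨c, rfl, hr⟩ | ⟨c, hc, hr⟩)
      · exact ⟨c, Or.inl rfl, hr⟩
      · exact ⟨c, Or.inr hc, hr⟩
  have h1 : ∀ σ : List β, dm r (lexmax r σ) = dl r σ := by
    intro σ
    induction σ with
    | nil => simp [dm, dl, ds, lexmax]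
    | cons a σ ih =>
      ext x
      have ihx : ∀ y, y ∈ dm r (lexmax r σ) ↔ y ∈ dl r σ := fun y => by rw [ih]
      simp only [dm, dl, ds, Set.mem_setOf_eq, List.mem_cons, lexmax, Multiset.mem_add,
        Multiset.mem_singleton, hmem] at *
      constructor
      · rintro ⟨c, (rfl | ⟨hc, hns⟩), hr⟩
        · exact ⟨c, Or.inl rfl, hr⟩
        · obtain ⟨d, hd, hrd⟩ := (ihx x).mp ⟨c, hc, hr⟩
          exact ⟨d, Or.inr hd, hrd⟩
      · rintro ⟨c, (rfl | hc), hr⟩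
        · exact ⟨c, Or.inl rfl, hr⟩
        · obtain ⟨d, hd, hrd⟩ := (ihx x).mpr ⟨c, hc, hr⟩
          by_cases hda : r d a
          · exact ⟨a, Or.inl rfl, htrans hrd hda⟩
          · refine ⟨d, Or.inr ⟨hd, ?_⟩, hrd⟩
            rintro ⟨e, rfl, hre⟩
            exact hda hre
  refine ⟨h1, fun σ τ => ?_⟩
  induction σ with
  | nil =>
    have : msub (lexmax r τ) (dl r []) = lexmax r τ := by
      rw [msub, filter_ext _ (fun _ => True) _ (fun _ => inferInstance)
        (by simp [dl, ds]), Multiset.filter_eq_self]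
      exact fun _ _ => trivial
    simp [this, lexmax]
  | cons a σ ih =>
    show lexmax r (a :: (σ ++ τ)) = _
    rw [lexmax, ih, hmsub_add, hmsub_msub, lexmax, hdl_cons]
    rw [Set.union_comm (dl r σ) (ds r {a})]
    rw [add_assoc]
end

section
/- If ≺ is a transitive relation, then the transitive closure of the one-step multiset extension of ≺ coincides with the direct multiset extension ≺_mul; moreover, the relation ≼_mul is exactly the reflexive closure of ≺_mul. -/
open Relation

universe u v

variable {α : Type u} {β : Type v}

lemma mem_dm_iff {r : β → β → Prop} {k : β} {J : Multiset β} :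
    k ∈ dm r J ↔ ∃ a, a ∈ J ∧ r k a := Iff.rfl

lemma mult1_mulLt {r : β → β → Prop} {M N : Multiset β} (h : mult1 r M N) :
    mulLt r M N := by
  obtain ⟨a, I, K, hM, hN, hK⟩ := h
  exact ⟨I, {a}, K, hM, hN, fun k hk => ⟨a, Multiset.mem_singleton_self a, hK k hk⟩,
    by simp⟩

lemma mulLt_transGen {r : β → β → Prop} (J : Multiset β) :
    ∀ I K : Multiset β, (∀ k ∈ K, ∃ a ∈ J, r k a) → J ≠ 0 →
      Relation.TransGen (mult1 r) (I + K) (I + J) := by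
  induction J using Multiset.induction with
  | empty => intro I K _ hJ; exact absurd rfl hJ
  | cons a J' ih =>
    intro I K hK _
    by_cases hJ' : J' = (0 : Multiset β)
    · subst hJ'
      refine Relation.TransGen.single ⟨a, I, K, rfl, by simp, ?_⟩
      intro b hb
      obtain ⟨c, hc, hr⟩ := hK b hb
      simp at hc; subst hc; exact hr
    · classical
      set K1 := K.filter (fun k => r k a) with hK1
      set K2 := K.filter (fun k => ¬ r k a) with hK2
      have hsplit : K1 + K2 = K := Multiset.filter_add_not _ K
      have hK2' : ∀ k ∈ K2, ∃ b ∈ J', r k b := by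
        intro k hk
        have hkK : k ∈ K := Multiset.mem_of_mem_filter hk
        have hnr : ¬ r k a := (Multiset.mem_filter.mp hk).2
        obtain ⟨b, hb, hr⟩ := hK k hkK
        rcases Multiset.mem_cons.mp hb with h | h
        · exact absurd (h ▸ hr) hnr
        · exact ⟨b, h, hr⟩
      have step1 : Relation.TransGen (mult1 r) ((I + K1) + K2) ((I + K1) + J') :=
        ih (I + K1) K2 hK2' hJ'
      have step2 : mult1 r ((I + J') + K1) ((I + J') + {a}) := by
        refine ⟨a, I + J', K1, rfl, rfl, ?_⟩
        intro b hb; exact (Multiset.mem_filter.mp hb).2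
      have e1 : (I + K1) + K2 = I + K := by rw [add_assoc, hsplit]
      have e2 : (I + K1) + J' = (I + J') + K1 := by
        rw [add_assoc, add_assoc, add_comm K1 J']
      have e3 : (I + J') + {a} = I + (a ::ₘ J') := by
        rw [← Multiset.singleton_add, add_comm ({a} : Multiset β) J', ← add_assoc]
      rw [e1, e2] at step1
      rw [e3] at step2
      exact step1.tail step2

lemma mulLt_mult1_trans {r : β → β → Prop} (htrans : Transitive r)
    {M P N : Multiset β} (h1 : mulLt r M P) (h2 : mult1 r P N) : mulLt r M N := by
  classical
  obtain ⟨I, J, K, hM, hP, hKJ, hJ⟩ := h1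
  obtain ⟨a, I', K', hP', hN, hK'⟩ := h2
  have hcnt : ∀ b : β, Multiset.count b I + Multiset.count b J
      = Multiset.count b I' + Multiset.count b K' := by
    intro b
    have := congrArg (Multiset.count b) (hP ▸ hP' : I + J = I' + K')
    simpa [Multiset.count_add] using this
  set x := I - I' with hx
  set y := I' - I with hy
  have hIx : I = (I - x) + x := (tsub_add_cancel_of_le (Multiset.sub_le_self I I')).symm
  have hI' : I' = (I - x) + y := by
    ext b
    have := hcnt b
    simp only [hx, hy, Multiset.count_add, Multiset.count_sub]
    omega
  have hxK' : ∀ k ∈ x, k ∈ K' := by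
    intro k hk
    rw [← Multiset.count_pos] at hk ⊢
    have := hcnt k
    simp only [hx, Multiset.count_sub] at hk
    omega
  refine ⟨I - x, y + {a}, x + K, ?_, ?_, ?_, by simp⟩
  · rw [← add_assoc, ← hIx, hM]
  · rw [hN, hI', add_assoc]
  · intro k hk
    rcases Multiset.mem_add.mp hk with hk | hk
    · exact ⟨a, by simp, hK' k (hxK' k hk)⟩
    · obtain ⟨j, hj, hr⟩ := hKJ k hk
      by_cases hjy : j ∈ y
      · exact ⟨j, Multiset.mem_add.mpr (Or.inl hjy), hr⟩
      · have hjK' : j ∈ K' := by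
          rw [← Multiset.count_pos] at hjy ⊢
          have hjJ : 0 < Multiset.count j J := Multiset.count_pos.mpr hj
          have := hcnt j
          simp only [hy, Multiset.count_sub] at hjy
          omega
        exact ⟨a, by simp, htrans hr (hK' j hjK')⟩

/-- the transitive closure of the one-step multiset extension
coincides with `≺_mul`, and `≼_mul` is the reflexive closure of `≺_mul` -/
theorem transGen_mult1_eq_mulLt_and_mulLe_eq_reflGen {β : Type v}
    (r : β → β → Prop) (htrans : Transitive r) :
    (∀ M N : Multiset β, Relation.TransGen (mult1 r) M N ↔ mulLt r M N) ∧
    (∀ M N : Multiset β, mulLe r M N ↔ (M = N ∨ mulLt r M N)) := by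
  constructor
  · intro M N
    constructor
    · intro h
      induction h with
      | single h => exact mult1_mulLt h
      | tail _ hstep ih => exact mulLt_mult1_trans htrans ih hstep
    · rintro ⟨I, J, K, hM, hN, hKJ, hJ⟩
      subst hM hN
      exact mulLt_transGen J I K hKJ hJ
  · intro M N
    constructor
    · rintro ⟨I, J, K, hM, hN, hKJ⟩
      by_cases hJ : J = (0 : Multiset β)
      · subst hJ
        have hK : K = 0 := by
          by_contra h
          obtain ⟨k, hk⟩ := Multiset.exists_mem_of_ne_zero h
          obtain ⟨b, hb, -⟩ := hKJ k hk
          simp at hb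
        left; rw [hM, hN, hK]
      · exact Or.inr ⟨I, J, K, hM, hN, hKJ, hJ⟩
    · rintro (rfl | ⟨I, J, K, hM, hN, hKJ, -⟩)
      · exact ⟨M, 0, 0, by simp, by simp, by simp⟩
      · exact ⟨I, J, K, hM, hN, hKJ⟩
end
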